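/- Let p, q ∈ (1,∞) and n a nonnegative integer. Then ∫₀^{π_{p,q}/2} sin_{p,q}^{qn+q−2}(t) dt = [(1/q*)_n / ((q−1)·(1/p* + 1/q*)_n)] · π_{p,q*}/2, where q* = q/(q−1). -/

import Mathlib

open Set MeasureTheory Filter

/-- Generalized arcsine: `arcsin_{p,q}(x) = ∫₀ˣ (1 - tᵠ)^(-1/p) dt`. -/
noncomputable def gArcsin (p q x : ℝ) : ℝ := ∫ t in (0:ℝ)..x, (1 - t ^ q) ^ (-(1 / p))

/-- Generalized pi: `π_{p,q} = 2 ∫₀¹ (1 - tᵠ)^(-1/p) dt`. -/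
noncomputable def gPi (p q : ℝ) : ℝ := 2 * gArcsin p q 1

/-- `S` is the generalized sine `sin_{p,q}` (the inverse of `gArcsin p q` on `[0,1]`). -/
def IsGSin (p q : ℝ) (S : ℝ → ℝ) : Prop :=
  ∀ y ∈ Icc (0:ℝ) 1, S (gArcsin p q y) = y

/-- `C` is the generalized cosine `cos_{p,q}`, the derivative of `S = sin_{p,q}`
on `[0, π_{p,q}/2]`. -/
def IsGCos (p q : ℝ) (S C : ℝ → ℝ) : Prop :=
  ∀ x ∈ Icc (0:ℝ) (gPi p q / 2), HasDerivWithinAt S (C x) (Icc (0:ℝ) (gPi p q / 2)) x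

/-!
Substituting `t = arcsin_{p,q} x` turns the integral of `sin_{p,q}^s` into the beta-type integral
`B(s) = ∫₀¹ xˢ (1 - x^q)^(-1/p) dx`. The derivative of `x^(s+1) (1 - x^q)^(1/p*)`, which vanishes
at both ends, integrates to the recurrence `(s + 1 + q/p*) B(s + q) = (s + 1) B(s)`; so along
`s = qn + q - 2` the values `B(s)` are Pochhammer quotients times `B(q - 2)`. Finally the
substitution `t = x^(q-1)`, for which `t^(q*) = x^q`, shows `π_{p,q*}/2 = (q - 1) B(q - 2)`.
-/

-- The substitution `u = xᵠ` gives `gBeta p q s = B((s + 1)/q, 1/p*)/q`.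
noncomputable def gBeta (p q s : ℝ) : ℝ := ∫ x in (0:ℝ)..1, x ^ s * (1 - x ^ q) ^ (-(1 / p))

lemma one_sub_rpow_pos {q x : ℝ} (hq : 0 < q) (hx0 : 0 ≤ x) (hx1 : x < 1) : 0 < 1 - x ^ q :=
  sub_pos.mpr (Real.rpow_lt_one hx0 hx1 hq)

lemma rpow_mul_one_sub_rpow_rpow_le {p q s x : ℝ} (hp : 0 < p) (hq : 1 ≤ q) (hx0 : 0 < x)
    (hx1 : x < 1) : x ^ s * (1 - x ^ q) ^ (-(1 / p)) ≤ x ^ s * (1 - x) ^ (-(1 / p)) := by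
  have hxq : x ^ q ≤ x := by simpa using Real.rpow_le_rpow_of_exponent_ge hx0 hx1.le hq
  refine mul_le_mul_of_nonneg_left ?_ (Real.rpow_nonneg hx0.le s)
  exact Real.rpow_le_rpow_of_nonpos (by linarith) (by linarith) (by simp [hp.le])

lemma gBeta_intervalIntegrable {p q s : ℝ} (hp : 1 < p) (hq : 1 ≤ q) (hs : -1 < s) :
    IntervalIntegrable (fun x : ℝ => x ^ s * (1 - x ^ q) ^ (-(1 / p))) volume 0 1 := by
  have hp0 : 0 < 1 / p := by positivity
  have hp1 : 1 / p < 1 := by rw [div_lt_one (by linarith)]; exact hp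
  have hbeta := Complex.betaIntegral_convergent (u := ((s + 1 : ℝ) : ℂ))
    (v := ((1 - 1 / p : ℝ) : ℂ)) (by simp only [Complex.ofReal_re]; linarith)
    (by simp only [Complex.ofReal_re]; linarith)
  refine hbeta.mono_fun (by fun_prop) ((ae_restrict_iff' measurableSet_uIoc).mpr
    (Eventually.of_forall fun x hx => ?_))
  rw [uIoc_of_le zero_le_one] at hx
  obtain ⟨hx0, hx1⟩ := hx
  dsimp only
  have hxq : x ^ q ≤ 1 := Real.rpow_le_one hx0.le hx1 (by linarith)
  rw [Real.norm_of_nonneg (mul_nonneg (Real.rpow_nonneg hx0.le _)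
      (Real.rpow_nonneg (sub_nonneg.mpr hxq) _)), norm_mul,
    Complex.norm_cpow_eq_rpow_re_of_pos hx0]
  rcases hx1.lt_or_eq with hx1 | rfl
  · have h1x : (0:ℝ) < 1 - x := by linarith
    rw [show (1 : ℂ) - x = ((1 - x : ℝ) : ℂ) by push_cast; ring,
      Complex.norm_cpow_eq_rpow_re_of_pos h1x]
    simpa using rpow_mul_one_sub_rpow_rpow_le (s := s) (by linarith) hq hx0 hx1
  · have : -p⁻¹ ≠ 0 := by simpa using hp0.ne'
    simp [Real.zero_rpow this]

section gArcsin

variable {p q : ℝ}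

lemma intervalIntegrable_gArcsin_integrand (hp : 1 < p) (hq : 1 ≤ q) :
    IntervalIntegrable (fun t : ℝ => (1 - t ^ q) ^ (-(1 / p))) volume 0 1 := by
  simpa using gBeta_intervalIntegrable hp hq (s := 0) (by norm_num)

@[simp]
lemma gArcsin_zero : gArcsin p q 0 = 0 := intervalIntegral.integral_same

lemma gArcsin_hasDerivAt (hp : 1 < p) (hq : 1 ≤ q) {x : ℝ} (hx0 : 0 ≤ x) (hx1 : x < 1) :
    HasDerivAt (gArcsin p q) ((1 - x ^ q) ^ (-(1 / p))) x := by
  refine intervalIntegral.integral_hasDerivAt_right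
    ((intervalIntegrable_gArcsin_integrand hp hq).mono_set ?_)
    (Measurable.aestronglyMeasurable (by fun_prop)).stronglyMeasurableAtFilter ?_
  · rw [uIcc_of_le hx0, uIcc_of_le zero_le_one]
    exact Icc_subset_Icc_right hx1.le
  · have hb := one_sub_rpow_pos (q := q) (by linarith) hx0 hx1
    exact (continuousAt_const.sub
      (Real.continuousAt_rpow_const x q (Or.inr (by linarith)))).rpow_const (Or.inl hb.ne')

lemma gArcsin_continuousOn (hp : 1 < p) (hq : 1 ≤ q) :
    ContinuousOn (gArcsin p q) (Icc 0 1) := by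
  have h := intervalIntegral.continuousOn_primitive_interval
    ((intervalIntegrable_iff').mp (intervalIntegrable_gArcsin_integrand hp hq))
  rwa [uIcc_of_le zero_le_one] at h

lemma gArcsin_strictMonoOn (hp : 1 < p) (hq : 1 ≤ q) :
    StrictMonoOn (gArcsin p q) (Icc 0 1) := by
  refine strictMonoOn_of_deriv_pos (convex_Icc 0 1) (gArcsin_continuousOn hp hq) fun x hx => ?_
  rw [interior_Icc] at hx
  rw [(gArcsin_hasDerivAt hp hq hx.1.le hx.2).deriv]
  exact Real.rpow_pos_of_pos (one_sub_rpow_pos (by linarith) hx.1.le hx.2) _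

lemma gArcsin_one_pos (hp : 1 < p) (hq : 1 ≤ q) : 0 < gArcsin p q 1 := by
  simpa using gArcsin_strictMonoOn hp hq (left_mem_Icc.mpr zero_le_one)
    (right_mem_Icc.mpr zero_le_one) one_pos

lemma gArcsin_image_Ioo (hp : 1 < p) (hq : 1 ≤ q) :
    gArcsin p q '' Ioo 0 1 = Ioo 0 (gArcsin p q 1) := by
  refine Subset.antisymm ?_ ?_
  · rintro _ ⟨x, hx, rfl⟩
    have hmono := gArcsin_strictMonoOn hp hq
    have hx' : x ∈ Icc (0:ℝ) 1 := Ioo_subset_Icc_self hx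
    refine ⟨?_, hmono hx' (right_mem_Icc.mpr zero_le_one) hx.2⟩
    simpa using hmono (left_mem_Icc.mpr zero_le_one) hx' hx.1
  · simpa using intermediate_value_Ioo zero_le_one (gArcsin_continuousOn hp hq)

lemma setIntegral_Ioo_eq_integral_comp_gArcsin (hp : 1 < p) (hq : 1 ≤ q) (g : ℝ → ℝ) :
    ∫ t in Ioo 0 (gArcsin p q 1), g t
      = ∫ x in Ioo 0 1, (1 - x ^ q) ^ (-(1 / p)) * g (gArcsin p q x) := by
  rw [← gArcsin_image_Ioo hp hq,
    integral_image_eq_integral_abs_deriv_smul measurableSet_Ioo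
      (fun x hx => (gArcsin_hasDerivAt hp hq hx.1.le hx.2).hasDerivWithinAt)
      ((gArcsin_strictMonoOn hp hq).injOn.mono Ioo_subset_Icc_self) g]
  refine setIntegral_congr_fun measurableSet_Ioo fun x hx => ?_
  rw [smul_eq_mul, abs_of_pos (Real.rpow_pos_of_pos
    (one_sub_rpow_pos (by linarith) hx.1.le hx.2) _)]

end gArcsin

lemma integral_rpow_of_isGSin {p q : ℝ} (hp : 1 < p) (hq : 1 ≤ q) {S : ℝ → ℝ} (hS : IsGSin p q S)
    (s : ℝ) : ∫ t in (0:ℝ)..(gPi p q / 2), S t ^ s = gBeta p q s := by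
  rw [gPi, mul_div_cancel_left₀ _ two_ne_zero,
    intervalIntegral.integral_of_le (gArcsin_one_pos hp hq).le, integral_Ioc_eq_integral_Ioo,
    setIntegral_Ioo_eq_integral_comp_gArcsin hp hq, gBeta,
    intervalIntegral.integral_of_le zero_le_one, integral_Ioc_eq_integral_Ioo]
  refine setIntegral_congr_fun measurableSet_Ioo fun x hx => ?_
  rw [hS x (Ioo_subset_Icc_self hx), mul_comm]

lemma hasDerivAt_rpow_mul_one_sub_rpow_rpow {a q r x : ℝ} (hx0 : 0 < x) (hx1 : x < 1)
    (hq : 0 < q) :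
    HasDerivAt (fun u : ℝ => u ^ (a + 1) * (1 - u ^ q) ^ (r + 1))
      ((a + 1) * (x ^ a * (1 - x ^ q) ^ r)
        - (a + 1 + q * (r + 1)) * (x ^ (a + q) * (1 - x ^ q) ^ r)) x := by
  have hb := one_sub_rpow_pos hq hx0.le hx1
  have hleft := Real.hasDerivAt_rpow_const (x := x) (p := a + 1) (Or.inl hx0.ne')
  have hright := (Real.hasDerivAt_rpow_const (Or.inl hb.ne') (p := r + 1)).comp x
    ((Real.hasDerivAt_rpow_const (x := x) (p := q) (Or.inl hx0.ne')).const_sub 1)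
  refine (hleft.mul hright).congr_deriv ?_
  simp only [Function.comp_apply]
  rw [add_sub_cancel_right, add_sub_cancel_right, Real.rpow_add_one hx0.ne',
    Real.rpow_add_one hb.ne', Real.rpow_add hx0, Real.rpow_sub_one hx0.ne']
  field_simp
  ring

lemma gBeta_recurrence {p q a : ℝ} (hp : 1 < p) (hq : 1 ≤ q) (ha : -1 < a) :
    (a + 1 + q * (1 - 1 / p)) * gBeta p q (a + q) = (a + 1) * gBeta p q a := by
  have hβ : 0 < 1 - 1 / p := by
    have : 1 / p < 1 := by rw [div_lt_one (by linarith)]; exact hp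
    linarith
  have hr : -(1 / p) + 1 = 1 - 1 / p := by ring
  have hint := gBeta_intervalIntegrable hp hq ha
  have hint' := gBeta_intervalIntegrable hp hq (s := a + q) (by linarith)
  have hcont : ContinuousOn (fun u : ℝ => u ^ (a + 1) * (1 - u ^ q) ^ (-(1 / p) + 1))
      (Icc 0 1) := by
    refine ContinuousOn.mul (continuousOn_id.rpow_const fun _ _ => Or.inr (by linarith)) ?_
    exact (continuousOn_const.sub (continuousOn_id.rpow_const fun _ _ => Or.inr (by linarith)))
      |>.rpow_const fun _ _ => Or.inr (by linarith)
  have hFTC := intervalIntegral.integral_eq_sub_of_hasDeriv_right_of_le zero_le_one hcont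
    (fun x hx => (hasDerivAt_rpow_mul_one_sub_rpow_rpow hx.1 hx.2
      (by linarith)).hasDerivWithinAt) ((hint.const_mul _).sub (hint'.const_mul _))
  rw [intervalIntegral.integral_sub (hint.const_mul _) (hint'.const_mul _),
    intervalIntegral.integral_const_mul, intervalIntegral.integral_const_mul, hr] at hFTC
  simp only [Real.zero_rpow (by linarith : a + 1 ≠ 0), Real.one_rpow, sub_self,
    Real.zero_rpow hβ.ne', mul_zero, zero_mul] at hFTC
  rw [gBeta, gBeta]
  linarith

lemma ascPochhammer_eval_mul_of_recurrence {R : Type*} [CommRing R] {u : ℕ → R} {a b : R}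
    (h : ∀ n : ℕ, (a + b + n) * u (n + 1) = (a + n) * u n) (n : ℕ) :
    (ascPochhammer R n).eval (a + b) * u n = (ascPochhammer R n).eval a * u 0 := by
  induction n with
  | zero => simp
  | succ n ih =>
    rw [ascPochhammer_succ_eval, ascPochhammer_succ_eval]
    linear_combination (ascPochhammer R n).eval (a + b) * h n + (a + n) * ih

lemma gBeta_ascPochhammer {p q : ℝ} (hp : 1 < p) (hq : 1 < q) (n : ℕ) :
    (ascPochhammer ℝ n).eval ((q - 1) / q + (p - 1) / p) * gBeta p q (q * n + q - 2)
      = (ascPochhammer ℝ n).eval ((q - 1) / q) * gBeta p q (q - 2) := by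
  have hq0 : q ≠ 0 := by positivity
  have hp0 : p ≠ 0 := by positivity
  suffices h : ∀ k : ℕ, ((q - 1) / q + (p - 1) / p + k) * gBeta p q (q * (k + 1 : ℕ) + q - 2)
      = ((q - 1) / q + k) * gBeta p q (q * k + q - 2) by
    simpa using ascPochhammer_eval_mul_of_recurrence
      (u := fun k : ℕ => gBeta p q (q * k + q - 2)) h n
  intro k
  have hk : -1 < q * k + q - 2 := by nlinarith [(Nat.cast_nonneg k : (0:ℝ) ≤ k)]
  apply mul_left_cancel₀ hq0
  have hrec := gBeta_recurrence hp hq.le hk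
  rw [show q * (k:ℝ) + q - 2 + q = q * ((k + 1 : ℕ) : ℝ) + q - 2 by push_cast; ring] at hrec
  convert hrec using 1 <;> field_simp <;> ring

lemma rpow_image_Ioo_zero_one {r : ℝ} (hr : 0 < r) : (· ^ r) '' Ioo (0:ℝ) 1 = Ioo 0 1 := by
  refine Subset.antisymm ?_ fun y hy => ?_
  · rintro _ ⟨x, hx, rfl⟩
    exact ⟨Real.rpow_pos_of_pos hx.1 _, Real.rpow_lt_one hx.1.le hx.2 hr⟩
  · refine ⟨y ^ r⁻¹, ⟨Real.rpow_pos_of_pos hy.1 _, Real.rpow_lt_one hy.1.le hy.2 (by positivity)⟩,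
      Real.rpow_inv_rpow hy.1.le hr.ne'⟩

lemma gArcsin_conjugate_one {p q : ℝ} (hq : 1 < q) :
    gArcsin p (q / (q - 1)) 1 = (q - 1) * gBeta p q (q - 2) := by
  have hq1 : 0 < q - 1 := by linarith
  have hsub := integral_image_eq_integral_abs_deriv_smul (s := Ioo (0:ℝ) 1)
    measurableSet_Ioo (f' := fun x : ℝ => (q - 1) * x ^ (q - 2))
    (fun x hx => by
      simpa [show q - 1 - 1 = q - 2 by ring] using
        (Real.hasDerivAt_rpow_const (p := q - 1) (Or.inl hx.1.ne')).hasDerivWithinAt)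
    ((Real.strictMonoOn_rpow_Ici_of_exponent_pos hq1).injOn.mono
      (Ioo_subset_Ioi_self.trans Ioi_subset_Ici_self))
    (fun t => (1 - t ^ (q / (q - 1))) ^ (-(1 / p)))
  rw [rpow_image_Ioo_zero_one hq1] at hsub
  rw [gArcsin, intervalIntegral.integral_of_le zero_le_one, integral_Ioc_eq_integral_Ioo, hsub,
    gBeta, intervalIntegral.integral_of_le zero_le_one, integral_Ioc_eq_integral_Ioo,
    ← integral_const_mul]
  refine setIntegral_congr_fun measurableSet_Ioo fun x hx => ?_
  have hxq : (x ^ (q - 1)) ^ (q / (q - 1)) = x ^ q := by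
    rw [← Real.rpow_mul hx.1.le, mul_div_cancel₀ _ hq1.ne']
  rw [smul_eq_mul, hxq, abs_of_pos (by have := hx.1; positivity)]
  ring

/-- Corollary 3.5, second formula:
`∫₀^{π_{p,q}/2} sin_{p,q}^{qn+q-2} t dt = (1/q*)ₙ/((q-1)(1/p* + 1/q*)ₙ) · π_{p,q*}/2`. -/
theorem stmt_11 (p q : ℝ) (n : ℕ) (hp : 1 < p) (hq : 1 < q)
    (S : ℝ → ℝ) (hS : IsGSin p q S) :
    ∫ t in (0:ℝ)..(gPi p q / 2), S t ^ (q * (n : ℝ) + q - 2) =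
      (ascPochhammer ℝ n).eval (1 / (q / (q - 1))) /
          ((q - 1) *
            (ascPochhammer ℝ n).eval (1 / (p / (p - 1)) + 1 / (q / (q - 1)))) *
        (gPi p (q / (q - 1)) / 2) := by
  have hrec := gBeta_ascPochhammer hp hq n
  have hpos : 0 < (ascPochhammer ℝ n).eval ((q - 1) / q + (p - 1) / p) :=
    ascPochhammer_pos n _ (add_pos (div_pos (by linarith) (by linarith))
      (div_pos (by linarith) (by linarith)))
  have hq1 : q - 1 ≠ 0 := by linarith
  rw [integral_rpow_of_isGSin hp hq.le hS, gPi, mul_div_cancel_left₀ _ two_ne_zero,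
    gArcsin_conjugate_one hq, one_div_div, one_div_div, add_comm ((p - 1) / p),
    div_mul_eq_mul_div, eq_div_iff (mul_ne_zero hq1 hpos.ne')]
  linear_combination (q - 1) * hrec
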